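/- Let f(x) = c_f·∏_{r∈R}(x−r) over a valued algebraically closed field, let D be a disc with centre z_D and rational depth d_D, and define ν_D(f) = min_i (v(c_i) + d_D·i) where c_i is the coefficient of x^i in f(x + z_D). Then ν_D(f) = v(c_f) + ∑_{r∈R} min{d_D, v(z_D − r)}. -/
import Mathlib


open Polynomial

section Aux

variable {F : Type*} [Field F] [DecidableEq F] (v : F → ℚ)

lemma aux_v_one (hmul : ∀ x y : F, x ≠ 0 → y ≠ 0 → v (x * y) = v x + v y) :
    v (1 : F) = 0 := by
  have h := hmul 1 1 one_ne_zero one_ne_zero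
  simp at h; linarith

lemma aux_v_neg (hmul : ∀ x y : F, x ≠ 0 → y ≠ 0 → v (x * y) = v x + v y)
    (x : F) (hx : x ≠ 0) : v (-x) = v x := by
  have hm1 : v (-1 : F) = 0 := by
    have h := hmul (-1) (-1) (by norm_num) (by norm_num)
    simp at h
    have h1 := aux_v_one v hmul
    linarith
  have hx' : v (-x) = v ((-1 : F) * x) := by norm_num
  rw [hx', hmul (-1) x (by norm_num) hx, hm1, zero_add]

lemma aux_v_add_lt (hmul : ∀ x y : F, x ≠ 0 → y ≠ 0 → v (x * y) = v x + v y)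
    (hadd : ∀ x y : F, x ≠ 0 → y ≠ 0 → x + y ≠ 0 → min (v x) (v y) ≤ v (x + y))
    (x y : F) (hx : x ≠ 0) (hy : y ≠ 0) (hlt : v x < v y) :
    x + y ≠ 0 ∧ v (x + y) = v x := by
  have hne : x + y ≠ 0 := by
    intro h
    have hyx : y = -x := by linear_combination h
    rw [hyx, aux_v_neg v hmul x hx] at hlt
    exact lt_irrefl _ hlt
  refine ⟨hne, le_antisymm ?_ ?_⟩
  · by_contra hgt
    push_neg at hgt
    have h1 : x + y + -y = x := by ring
    have h2 := hadd (x + y) (-y) hne (neg_ne_zero.mpr hy) (by rw [h1]; exact hx)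
    rw [aux_v_neg v hmul y hy, h1] at h2
    have := le_min (le_of_lt hgt) (le_of_lt hlt)
    have := lt_of_lt_of_le (lt_min hgt hlt) h2
    exact lt_irrefl _ this
  · have := hadd x y hx hy hne
    rwa [min_eq_left (le_of_lt hlt)] at this

lemma step_lemma (hmul : ∀ x y : F, x ≠ 0 → y ≠ 0 → v (x * y) = v x + v y)
    (hadd : ∀ x y : F, x ≠ 0 → y ≠ 0 → x + y ≠ 0 → min (v x) (v y) ≤ v (x + y))
    (dD : ℚ) (h : F[X]) (a : F) (W : ℚ)
    (hP : IsLeast {x : ℚ | ∃ i : ℕ, h.coeff i ≠ 0 ∧ x = v (h.coeff i) + dD * i} W) :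
    IsLeast {x : ℚ | ∃ i : ℕ, (h * (X + C a)).coeff i ≠ 0 ∧
        x = v ((h * (X + C a)).coeff i) + dD * i}
      (W + if a = 0 then dD else min dD (v a)) := by
  set m : ℚ := if a = 0 then dD else min dD (v a) with hm
  have hm_le : m ≤ dD := by
    rw [hm]; split_ifs with h
    · exact le_refl _
    · exact min_le_left _ _
  have hlb : ∀ k : ℕ, h.coeff k ≠ 0 → W ≤ v (h.coeff k) + dD * k :=
    fun k hk => hP.2 ⟨k, hk, rfl⟩
  have hco : ∀ n : ℕ, (h * (X + C a)).coeff n = (h * X).coeff n + h.coeff n * a := by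
    intro n; rw [mul_add, coeff_add, coeff_mul_C]
  have hX0 : (h * X).coeff 0 = 0 := by simp [mul_coeff_zero]
  have claim1 : ∀ i : ℕ, (h * X).coeff i ≠ 0 → W + m ≤ v ((h * X).coeff i) + dD * i := by
    intro i hi
    match i with
    | 0 => exact absurd hX0 hi
    | k + 1 =>
      rw [coeff_mul_X] at hi ⊢
      have := hlb k hi
      push_cast
      have hle : W + m ≤ (v (h.coeff k) + dD * k) + dD := by linarith
      calc W + m ≤ (v (h.coeff k) + dD * k) + dD := hle
        _ = v (h.coeff k) + dD * ((k : ℚ) + 1) := by ring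
  have claim2 : ∀ i : ℕ, h.coeff i * a ≠ 0 → W + m ≤ v (h.coeff i * a) + dD * i := by
    intro i hi
    have hi1 : h.coeff i ≠ 0 := fun h0 => hi (by rw [h0, zero_mul])
    have ha : a ≠ 0 := fun h0 => hi (by rw [h0, mul_zero])
    rw [hmul _ _ hi1 ha]
    have h1 := hlb i hi1
    have h2 : m ≤ v a := by rw [hm, if_neg ha]; exact min_le_right _ _
    linarith
  constructor
  · -- membership
    by_cases ha : a = 0
    · subst ha
      obtain ⟨j, hj, hWj⟩ := hP.1
      refine ⟨j + 1, ?_, ?_⟩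
      · rw [hco, coeff_mul_X]; simpa using hj
      · rw [hco, coeff_mul_X]
        simp only [mul_zero, add_zero]
        rw [hm, if_pos rfl]
        push_cast
        rw [hWj]; ring
    · -- a ≠ 0
      have hmne : m = min dD (v a) := by rw [hm, if_neg ha]
      set S : Finset ℕ := h.support.filter (fun i => v (h.coeff i) + dD * i = W) with hSdef
      have hS : S.Nonempty := by
        obtain ⟨j, hj, hWj⟩ := hP.1
        exact ⟨j, Finset.mem_filter.mpr ⟨mem_support_iff.mpr hj, hWj.symm⟩⟩
      by_cases hva : v a < dD
      · -- m = v a; use smallest index of S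
        have hmva : m = v a := by rw [hmne, min_eq_right (le_of_lt hva)]
        set j := S.min' hS with hjdef
        obtain ⟨hjsupp, hjW⟩ := Finset.mem_filter.mp (S.min'_mem hS)
        have hjne : h.coeff j ≠ 0 := mem_support_iff.mp hjsupp
        have hb2 : h.coeff j * a ≠ 0 := mul_ne_zero hjne ha
        have hv2 : v (h.coeff j * a) + dD * j = W + v a := by
          rw [hmul _ _ hjne ha]; linarith
        refine ⟨j, ?_⟩
        rw [hco]
        by_cases hb1 : (h * X).coeff j = 0
        · rw [hb1, zero_add]
          exact ⟨hb2, by rw [hmva]; linarith⟩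
        · have hjne0 : j ≠ 0 := by intro h0; rw [h0] at hb1; exact hb1 hX0
          obtain ⟨k, hk⟩ := Nat.exists_eq_succ_of_ne_zero hjne0
          have hb1' : (h * X).coeff j = h.coeff k := by rw [hk, coeff_mul_X]
          have hkne : h.coeff k ≠ 0 := by rw [hb1'] at hb1; exact hb1
          have hkW : v (h.coeff k) + dD * k ≠ W := by
            intro hkWeq
            have hkS : k ∈ S := Finset.mem_filter.mpr ⟨mem_support_iff.mpr hkne, hkWeq⟩
            have := S.min'_le k hkS
            omega
          have hk1 : W < v (h.coeff k) + dD * k := lt_of_le_of_ne (hlb k hkne) (Ne.symm hkW)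
          have hjk : (j : ℚ) = (k : ℚ) + 1 := by rw [hk]; push_cast; ring
          have hstrict : v (h.coeff j * a) < v ((h * X).coeff j) := by
            rw [hb1', hmul _ _ hjne ha]
            have hvj : v (h.coeff j) = W - dD * j := by linarith
            rw [hvj, hjk]
            linarith
          obtain ⟨hne, heq⟩ := aux_v_add_lt v hmul hadd _ _ hb2 hb1 hstrict
          rw [add_comm (h.coeff j * a)] at hne heq
          exact ⟨hne, by rw [heq, hv2, hmva]⟩
      · -- m = dD; use largest index of S, shifted by one
        push_neg at hva
        have hmda : m = dD := by rw [hmne, min_eq_left hva]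
        set j := S.max' hS with hjdef
        obtain ⟨hjsupp, hjW⟩ := Finset.mem_filter.mp (S.max'_mem hS)
        have hjne : h.coeff j ≠ 0 := mem_support_iff.mp hjsupp
        have hb1' : (h * X).coeff (j + 1) = h.coeff j := coeff_mul_X ..
        have hb1 : (h * X).coeff (j + 1) ≠ 0 := by rw [hb1']; exact hjne
        have hv1 : v ((h * X).coeff (j + 1)) + dD * ((j : ℚ) + 1) = W + dD := by
          rw [hb1']; linarith
        refine ⟨j + 1, ?_⟩
        rw [hco]
        by_cases hcj : h.coeff (j + 1) = 0
        · rw [hcj, zero_mul, add_zero]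
          refine ⟨hb1, ?_⟩
          rw [hmda]
          push_cast
          linarith
        · have hb2 : h.coeff (j + 1) * a ≠ 0 := mul_ne_zero hcj ha
          have hkW : v (h.coeff (j + 1)) + dD * (j + 1 : ℕ) ≠ W := by
            intro hkWeq
            have hkS : j + 1 ∈ S := Finset.mem_filter.mpr ⟨mem_support_iff.mpr hcj, hkWeq⟩
            have := S.le_max' (j + 1) hkS
            omega
          have hk1 : W < v (h.coeff (j + 1)) + dD * (j + 1 : ℕ) :=
            lt_of_le_of_ne (hlb (j + 1) hcj) (Ne.symm hkW)
          push_cast at hk1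
          have hstrict : v ((h * X).coeff (j + 1)) < v (h.coeff (j + 1) * a) := by
            rw [hb1', hmul _ _ hcj ha]
            linarith
          obtain ⟨hne, heq⟩ := aux_v_add_lt v hmul hadd _ _ hb1 hb2 hstrict
          refine ⟨hne, ?_⟩
          rw [heq, hmda]
          push_cast
          linarith
  · -- lower bound
    rintro x ⟨i, hi, rfl⟩
    rw [hco] at hi ⊢
    by_cases hb1 : (h * X).coeff i = 0
    · rw [hb1, zero_add] at hi ⊢
      exact claim2 i hi
    · by_cases hb2 : h.coeff i * a = 0
      · rw [hb2, add_zero] at hi ⊢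
        exact claim1 i hi
      · have := hadd _ _ hb1 hb2 hi
        rcases min_cases (v ((h * X).coeff i)) (v (h.coeff i * a)) with ⟨heq, _⟩ | ⟨heq, _⟩ <;>
          rw [heq] at this
        · linarith [claim1 i hb1]
        · linarith [claim2 i hb2]

lemma main_lemma (hmul : ∀ x y : F, x ≠ 0 → y ≠ 0 → v (x * y) = v x + v y)
    (hadd : ∀ x y : F, x ≠ 0 → y ≠ 0 → x + y ≠ 0 → min (v x) (v y) ≤ v (x + y))
    (dD : ℚ) (c : F) (hc : c ≠ 0) (s : Multiset F) :
    IsLeast {x : ℚ | ∃ i : ℕ, (C c * (s.map fun a => X + C a).prod).coeff i ≠ 0 ∧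
        x = v ((C c * (s.map fun a => X + C a).prod).coeff i) + dD * i}
      (v c + (s.map fun a => if a = 0 then dD else min dD (v a)).sum) := by
  induction s using Multiset.induction with
  | empty =>
    simp only [Multiset.map_zero, Multiset.prod_zero, mul_one, Multiset.sum_zero, add_zero]
    constructor
    · exact ⟨0, by simpa using hc, by simp⟩
    · rintro x ⟨i, hi, rfl⟩
      rw [coeff_C] at hi ⊢
      by_cases h0 : i = 0
      · subst h0; simp
      · simp [h0] at hi
  | cons a t ih =>
    rw [Multiset.map_cons, Multiset.map_cons, Multiset.prod_cons, Multiset.sum_cons]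
    have hre : C c * ((X + C a) * (t.map fun a => X + C a).prod) =
        (C c * (t.map fun a => X + C a).prod) * (X + C a) := by ring
    rw [hre]
    have hval : v c + ((if a = 0 then dD else min dD (v a)) +
        (t.map fun a => if a = 0 then dD else min dD (v a)).sum) =
        (v c + (t.map fun a => if a = 0 then dD else min dD (v a)).sum) +
          (if a = 0 then dD else min dD (v a)) := by ring
    rw [hval]
    exact step_lemma v hmul hadd dD _ a _ ih

end Aux

/-- For `f = c_f ∏_{r∈R}(X − r)` and a disc with centre `z_D` and depth `d_D`,
`ν_D(f) := min_i (v(c_i) + d_D·i)` (over nonzero coefficients `c_i` of `f(x + z_D)`)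
equals `v(c_f) + ∑_{r∈R} min{d_D, v(z_D − r)}` (where for `r = z_D` the minimum is `d_D`,
encoding `v(0) = ∞`). -/
theorem stmt_5 {F : Type*} [Field F] [DecidableEq F] (v : F → ℚ)
    (hmul : ∀ x y : F, x ≠ 0 → y ≠ 0 → v (x * y) = v x + v y)
    (hadd : ∀ x y : F, x ≠ 0 → y ≠ 0 → x + y ≠ 0 → min (v x) (v y) ≤ v (x + y))
    (c : F) (hc : c ≠ 0) (R : Multiset F) (zD : F) (dD : ℚ) (f g : F[X])
    (hf : f = Polynomial.C c * (R.map (fun r => Polynomial.X - Polynomial.C r)).prod)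
    (hg : g = f.comp (Polynomial.X + Polynomial.C zD)) :
    IsLeast {x : ℚ | ∃ i : ℕ, g.coeff i ≠ 0 ∧ x = v (g.coeff i) + dD * i}
      (v c + (R.map (fun r => if r = zD then dD else min dD (v (zD - r)))).sum) := by
  subst hf hg
  have hgeq : (C c * (R.map (fun r => X - C r)).prod).comp (X + C zD) =
      C c * ((R.map (fun r => zD - r)).map (fun a => X + C a)).prod := by
    rw [mul_comp, C_comp, multiset_prod_comp, Multiset.map_map, Multiset.map_map]
    congr 1
    congr 1
    apply Multiset.map_congr rfl
    intro r _
    simp only [Function.comp_apply, sub_comp, X_comp, C_comp, map_sub]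
    ring
  rw [hgeq]
  have hsum : (R.map (fun r => if r = zD then dD else min dD (v (zD - r)))).sum =
      ((R.map (fun r => zD - r)).map (fun a => if a = 0 then dD else min dD (v a))).sum := by
    rw [Multiset.map_map]
    congr 1
    apply Multiset.map_congr rfl
    intro r _
    simp only [Function.comp_apply, sub_eq_zero]
    by_cases hr : r = zD
    · rw [if_pos hr, if_pos hr.symm]
    · rw [if_neg hr, if_neg (fun h => hr h.symm)]
  rw [hsum]
  exact main_lemma v hmul hadd dD c hc (R.map (fun r => zD - r))
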